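/- Let H = ℂᵐ (a finite-dimensional complex Hilbert space), and let A₁₁, A₁₂, A₂₂ be Riccati data on H with diag{A₁₁} − A₂₂ ≫ 0, and assume A₁₁ ≥ 0 and A₂₂ ≥ 0 (no invertibility assumption on A₁₂A₁₂*). Then there exists one and only one positive-definite m×m matrix s with diag{s} − A₂₂ ≫ 0 satisfying s = A₁₁ + A₁₂(diag{s} − A₂₂)⁻¹A₁₂*; moreover s coincides with the strong limit of the even successive approximations s₀, s₂, s₄, … and with the strong limit of the odd successive approximations s₁, s₃, s₅, … -/

import Mathlib

open MeasureTheory ContinuousLinearMap Filter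
open scoped ENNReal NNReal Topology

noncomputable section

/-- `ℓ²(H)`: the Hilbert space of square-summable sequences in `H`, indexed by `ℕ`
(index `k : ℕ` corresponds to the `(k+1)`-st entry in the paper's `1`-based indexing). -/
abbrev l2 (H : Type*) [NormedAddCommGroup H] [InnerProductSpace ℂ H] : Type _ :=
  lp (fun _ : ℕ => H) 2

variable {H : Type*} [NormedAddCommGroup H] [InnerProductSpace ℂ H]

lemma memℓp_diag (q : H →L[ℂ] H) (ξ : l2 H) : Memℓp (fun k => q (ξ k)) 2 := by
  have h2 : (0:ℝ) < (2 : ℝ≥0∞).toReal := by norm_num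
  apply memℓp_gen
  have hs : Summable (fun k => ‖q‖ ^ (2 : ℝ≥0∞).toReal * ‖ξ k‖ ^ (2 : ℝ≥0∞).toReal) :=
    ((lp.memℓp ξ).summable h2).mul_left _
  refine Summable.of_nonneg_of_le (fun k => ?_) (fun k => ?_) hs
  · positivity
  · rw [← Real.mul_rpow (norm_nonneg _) (norm_nonneg _)]
    exact Real.rpow_le_rpow (norm_nonneg _) (q.le_opNorm _) (by norm_num)

/-- `diag{q}`: the bounded block-diagonal operator on `ℓ²(H)` acting componentwise,
`(diag{q} ξ)ₖ = q (ξₖ)`. -/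
def diagOp (q : H →L[ℂ] H) : l2 H →L[ℂ] l2 H :=
  LinearMap.mkContinuous
    { toFun := fun ξ => ⟨fun k => q (ξ k), memℓp_diag q ξ⟩
      map_add' := fun ξ η => by ext k; simp [lp.coeFn_add]; rfl
      map_smul' := fun c ξ => by ext k; simp [lp.coeFn_smul] }
    ‖q‖
    (by
      intro ξ
      have h2 : (0:ℝ) < (2 : ℝ≥0∞).toReal := by norm_num
      refine lp.norm_le_of_tsum_le h2 (by positivity) ?_
      have hξ : ‖ξ‖ ^ (2 : ℝ≥0∞).toReal = ∑' k, ‖ξ k‖ ^ (2 : ℝ≥0∞).toReal :=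
        lp.norm_rpow_eq_tsum h2 ξ
      have hsum : Summable (fun k => ‖ξ k‖ ^ (2 : ℝ≥0∞).toReal) := (lp.memℓp ξ).summable h2
      calc ∑' k, ‖(fun k => q (ξ k)) k‖ ^ (2 : ℝ≥0∞).toReal
          ≤ ∑' k, ‖q‖ ^ (2 : ℝ≥0∞).toReal * ‖ξ k‖ ^ (2 : ℝ≥0∞).toReal := by
            refine Summable.tsum_le_tsum (fun k => ?_) ?_ (hsum.mul_left _)
            · rw [← Real.mul_rpow (norm_nonneg _) (norm_nonneg _)]
              exact Real.rpow_le_rpow (norm_nonneg _) (q.le_opNorm _) (by norm_num)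
            · refine Summable.of_nonneg_of_le (fun k => ?_) (fun k => ?_)
                (hsum.mul_left (‖q‖ ^ (2 : ℝ≥0∞).toReal))
              · positivity
              · rw [← Real.mul_rpow (norm_nonneg _) (norm_nonneg _)]
                exact Real.rpow_le_rpow (norm_nonneg _) (q.le_opNorm _) (by norm_num)
        _ = (‖q‖ * ‖ξ‖) ^ (2 : ℝ≥0∞).toReal := by
            rw [tsum_mul_left, ← hξ, Real.mul_rpow (norm_nonneg _) (norm_nonneg _)])

@[simp] lemma diagOp_apply (q : H →L[ℂ] H) (ξ : l2 H) (k : ℕ) :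
    (diagOp q ξ) k = q (ξ k) := rfl

/-- An operator is *strongly positive* (written `ρ ≫ 0` in the paper) if `δ • I ≤ ρ`
(Loewner order) for some `δ > 0`.  A strongly positive operator is boundedly invertible. -/
def StronglyPositive {E : Type*} [NormedAddCommGroup E] [InnerProductSpace ℂ E]
    [CompleteSpace E] (ρ : E →L[ℂ] E) : Prop :=
  ∃ δ : ℝ, 0 < δ ∧ δ • (1 : E →L[ℂ] E) ≤ ρ

variable [CompleteSpace H]

/-- The Riccati map `ℱ(s) = A₁₁ + A₁₂ (diag{s} − A₂₂)⁻¹ A₁₂*`.  Here `Ring.inverse` is the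
genuine inverse whenever `diag{s} − A₂₂` is boundedly invertible, which is guaranteed when
`diag{s} − A₂₂ ≫ 0`. -/
def riccatiMap (A11 : H →L[ℂ] H) (A12 : l2 H →L[ℂ] H) (A22 : l2 H →L[ℂ] l2 H)
    (s : H →L[ℂ] H) : H →L[ℂ] H :=
  A11 + A12 ∘L Ring.inverse (diagOp s - A22) ∘L ContinuousLinearMap.adjoint A12

/-- The successive approximations `s₀ = A₁₁`, `s_{n+1} = ℱ(sₙ)`. -/
def riccatiSeq (A11 : H →L[ℂ] H) (A12 : l2 H →L[ℂ] H) (A22 : l2 H →L[ℂ] l2 H) :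
    ℕ → (H →L[ℂ] H)
  | 0 => A11
  | n + 1 => riccatiMap A11 A12 A22 (riccatiSeq A11 A12 A22 n)

/-!
Write `r = diag{s} − A₂₂` and `C = diag{A₁₁} − A₂₂ ≥ δ > 0`. Then `s = ℱ(s)` becomes the
fixed-point equation `r = Ψ r := C + diag{A₁₂ r⁻¹ A₁₂*}` on `{r | C ≤ r}`. The map `Ψ` sends this
set into `[C, (1 + μ) C]`, `μ = ‖A₁₂ A₁₂*‖ / δ²`, and since the part `diag{A₁₂ r⁻¹ A₁₂*}` that
scales under `r ↦ θ⁻¹ r` is at most `μ C`, it shrinks multiplicative gaps: `r ≤ θ t` implies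
`Ψ t ≤ (1 + c (θ - 1)) Ψ r` with `c = μ / (1 + μ) < 1`. So any two points `r, t` of
`[C, (1 + μ) C]` satisfy `Ψⁿ r ≤ (1 + μ cⁿ) Ψⁿ t`. This forces uniqueness of the fixed point and
makes `Ψⁿ C = diag{sₙ} − A₂₂` a Cauchy sequence in norm; hence `sₙ` converges in norm to the
solution, and so do its even and odd subsequences, a fortiori strongly.
-/

open Ring

lemma tendsto_mul_pow_div_one_add {μ : ℝ} (hμ : 0 ≤ μ) :
    Tendsto (fun n => μ * (μ / (1 + μ)) ^ n) atTop (𝓝 0) := by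
  have hc : μ / (1 + μ) < 1 := by rw [div_lt_one (by linarith)]; linarith
  simpa using (tendsto_pow_atTop_nhds_zero_of_lt_one (by positivity) hc).const_mul μ

lemma ringInverse_smul {𝕜 R : Type*} [Field 𝕜] [Ring R] [Algebra 𝕜 R] {a : R} (ha : IsUnit a)
    {c : 𝕜} (hc : c ≠ 0) : (c • a)⁻¹ʳ = c⁻¹ • a⁻¹ʳ := by
  have hu : IsUnit (c • a) := by
    rw [Algebra.smul_def]
    exact ((IsUnit.mk0 c hc).map (algebraMap 𝕜 R)).mul ha
  rw [← mul_one (c • a)⁻¹ʳ, Ring.inverse_mul_eq_iff_eq_mul _ _ _ hu, smul_mul_smul_comm,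
    mul_inv_cancel₀ hc, Ring.mul_inverse_cancel a ha, one_smul]

section OrderedModule

variable {A : Type*} [AddCommGroup A] [PartialOrder A] [Module ℝ A]

lemma le_of_forall_le_one_add_smul [TopologicalSpace A] [ContinuousSMul ℝ A]
    [OrderClosedTopology A] {a b : A} {ε : ℕ → ℝ} (hε : Tendsto ε atTop (𝓝 0))
    (h : ∀ n, a ≤ (1 + ε n) • b) : a ≤ b := by
  have hlim : Tendsto (fun n => (1 + ε n) • b) atTop (𝓝 b) := by
    simpa using ((tendsto_const_nhds (x := (1 : ℝ))).add hε).smul_const b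
  exact ge_of_tendsto' hlim h

lemma add_smul_le_smul_add [IsOrderedAddMonoid A] [PosSMulMono ℝ A] {C X : A} {μ θ : ℝ}
    (hμ : 0 ≤ μ) (hθ : 1 ≤ θ) (hX : X ≤ μ • C) :
    C + θ • X ≤ (1 + μ / (1 + μ) * (θ - 1)) • (C + X) := by
  set σ := 1 + μ / (1 + μ) * (θ - 1)
  have hσθ : 0 ≤ θ - σ := by
    have : μ / (1 + μ) ≤ 1 := by rw [div_le_one (by linarith)]; linarith
    simp only [σ]; nlinarith
  have key : (θ - σ) * μ = σ - 1 := by simp only [σ]; field_simp; ring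
  calc C + θ • X = C + σ • X + (θ - σ) • X := by rw [sub_smul]; abel
    _ ≤ C + σ • X + (σ - 1) • C := by
        gcongr
        calc (θ - σ) • X ≤ (θ - σ) • μ • C := smul_le_smul_of_nonneg_left hX hσθ
          _ = (σ - 1) • C := by rw [smul_smul, key]
    _ = σ • (C + X) := by rw [smul_add, sub_smul, one_smul]; abel

/-- The multiplicative gap `θ - 1` between `r` and `t` shrinks by the factor `μ / (1 + μ)`
under `Ψ`. -/
structure IsOrderContraction (C : A) (μ : ℝ) (Ψ : A → A) : Prop where
  nonneg : 0 ≤ μ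
  le_apply : ∀ r, C ≤ r → C ≤ Ψ r
  apply_le : ∀ r, C ≤ r → Ψ r ≤ (1 + μ) • C
  apply_le_smul_apply : ∀ r t (θ : ℝ), C ≤ r → C ≤ t → 1 ≤ θ → r ≤ θ • t →
    Ψ t ≤ (1 + μ / (1 + μ) * (θ - 1)) • Ψ r

namespace IsOrderContraction

variable {C : A} {μ : ℝ} {Ψ : A → A}

lemma mapsTo (h : IsOrderContraction C μ Ψ) :
    Set.MapsTo Ψ (Set.Icc C ((1 + μ) • C)) (Set.Icc C ((1 + μ) • C)) :=
  fun _ hr => ⟨h.le_apply _ hr.1, h.apply_le _ hr.1⟩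

lemma mem_Icc_of_isFixedPt (h : IsOrderContraction C μ Ψ) {r : A} (hr : C ≤ r)
    (hfix : Function.IsFixedPt Ψ r) : r ∈ Set.Icc C ((1 + μ) • C) :=
  hfix ▸ ⟨h.le_apply r hr, h.apply_le r hr⟩

lemma iterate_le_smul_iterate [PosSMulMono ℝ A] (h : IsOrderContraction C μ Ψ) (n : ℕ) :
    ∀ r ∈ Set.Icc C ((1 + μ) • C), ∀ t ∈ Set.Icc C ((1 + μ) • C),
      Ψ^[n] r ≤ (1 + μ * (μ / (1 + μ)) ^ n) • Ψ^[n] t := by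
  have hμ := h.nonneg
  induction n with
  | zero =>
    intro r hr t ht
    simpa using hr.2.trans (smul_le_smul_of_nonneg_left ht.1 (by linarith))
  | succ n ih =>
    intro r hr t ht
    have hθ : 1 ≤ 1 + μ * (μ / (1 + μ)) ^ n := le_add_of_nonneg_right (by positivity)
    have key := h.apply_le_smul_apply _ _ _ (h.mapsTo.iterate n ht).1
      (h.mapsTo.iterate n hr).1 hθ (ih t ht r hr)
    rw [Function.iterate_succ_apply', Function.iterate_succ_apply']
    convert key using 3
    ring

end IsOrderContraction

end OrderedModule

section CStarAlgebra

variable {A : Type*} [CStarAlgebra A] [PartialOrder A] [StarOrderedRing A]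

lemma IsSelfAdjoint.norm_le_of_neg_le_of_le {a : A} (ha : IsSelfAdjoint a) {r : ℝ} (hr : 0 ≤ r)
    (h₁ : -algebraMap ℝ A r ≤ a) (h₂ : a ≤ algebraMap ℝ A r) : ‖a‖ ≤ r := by
  rcases subsingleton_or_nontrivial A with _ | _
  · simpa [Subsingleton.elim a 0] using hr
  rcases CStarAlgebra.norm_or_neg_norm_mem_spectrum ha with h | h
  · exact (le_algebraMap_iff_spectrum_le ha).mp h₂ _ h
  · have := (algebraMap_le_iff_le_spectrum (r := -r) ha).mp (by simpa using h₁) _ h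
    linarith

lemma norm_sub_le_of_le_smul {a b : A} (ha : 0 ≤ a) (hb : 0 ≤ b) {ε M : ℝ} (hε : 0 ≤ ε)
    (haM : ‖a‖ ≤ M) (hbM : ‖b‖ ≤ M) (hab : a ≤ (1 + ε) • b) (hba : b ≤ (1 + ε) • a) :
    ‖a - b‖ ≤ ε * M := by
  have key : ∀ {x y : A}, 0 ≤ y → ‖y‖ ≤ M → x ≤ (1 + ε) • y →
      x - y ≤ algebraMap ℝ A (ε * M) := by
    intro x y hy hyM hxy
    calc x - y ≤ ε • y := by rw [sub_le_iff_le_add']; rwa [add_smul, one_smul] at hxy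
      _ ≤ ε • algebraMap ℝ A M := by
        refine smul_le_smul_of_nonneg_left ?_ hε
        exact (CStarAlgebra.norm_le_iff_le_algebraMap y ((norm_nonneg y).trans hyM) hy).mp hyM
      _ = algebraMap ℝ A (ε * M) := by rw [map_mul, Algebra.smul_def]
  refine (ha.isSelfAdjoint.sub hb.isSelfAdjoint).norm_le_of_neg_le_of_le
    (mul_nonneg hε ((norm_nonneg a).trans haM)) ?_ (key hb hbM hab)
  rw [neg_le, neg_sub]
  exact key ha haM hba

theorem IsOrderContraction.eq_of_isFixedPt {C : A} {μ : ℝ} {Ψ : A → A}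
    (h : IsOrderContraction C μ Ψ) {r t : A} (hr : C ≤ r) (ht : C ≤ t)
    (hrΨ : Function.IsFixedPt Ψ r) (htΨ : Function.IsFixedPt Ψ t) : r = t := by
  have hle : ∀ {x y : A}, C ≤ x → C ≤ y → Function.IsFixedPt Ψ x → Function.IsFixedPt Ψ y →
      x ≤ y := fun hx hy hxΨ hyΨ =>
    le_of_forall_le_one_add_smul (tendsto_mul_pow_div_one_add h.nonneg) fun n => by
      simpa only [(hxΨ.iterate n).eq, (hyΨ.iterate n).eq] using
        h.iterate_le_smul_iterate n _ (h.mem_Icc_of_isFixedPt hx hxΨ) _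
          (h.mem_Icc_of_isFixedPt hy hyΨ)
  exact le_antisymm (hle hr ht hrΨ htΨ) (hle ht hr htΨ hrΨ)

theorem IsOrderContraction.exists_tendsto_iterate {C : A} {μ : ℝ} {Ψ : A → A}
    (h : IsOrderContraction C μ Ψ) (hC : 0 ≤ C) :
    ∃ R, C ≤ R ∧ Tendsto (fun n => Ψ^[n] C) atTop (𝓝 R) := by
  have hμ := h.nonneg
  have hc : μ / (1 + μ) < 1 := by rw [div_lt_one (by linarith)]; linarith
  have hCmem : C ∈ Set.Icc C ((1 + μ) • C) := ⟨le_rfl, le_smul_of_one_le_left hC (by linarith)⟩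
  have hnorm : ∀ x ∈ Set.Icc C ((1 + μ) • C), ‖x‖ ≤ (1 + μ) * ‖C‖ := fun x hx => by
    calc ‖x‖ ≤ ‖(1 + μ) • C‖ := CStarAlgebra.norm_le_norm_of_nonneg_of_le (hC.trans hx.1) hx.2
      _ = (1 + μ) * ‖C‖ := by rw [norm_smul, Real.norm_of_nonneg (by linarith)]
  have hdist : ∀ n, dist (Ψ^[n] C) (Ψ^[n + 1] C) ≤
      (μ * ((1 + μ) * ‖C‖)) * (μ / (1 + μ)) ^ n := fun n => by
    have hx := h.mapsTo.iterate n hCmem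
    have hy := h.mapsTo.iterate n (h.mapsTo hCmem)
    rw [dist_eq_norm, Function.iterate_succ_apply, mul_right_comm]
    exact norm_sub_le_of_le_smul (hC.trans hx.1) (hC.trans hy.1) (by positivity) (hnorm _ hx)
      (hnorm _ hy) (h.iterate_le_smul_iterate n _ hCmem _ (h.mapsTo hCmem))
      (h.iterate_le_smul_iterate n _ (h.mapsTo hCmem) _ hCmem)
  obtain ⟨R, hR⟩ := cauchySeq_tendsto_of_complete (cauchySeq_of_le_geometric _ _ hc hdist)
  exact ⟨R, ge_of_tendsto' hR fun n => (h.mapsTo.iterate n hCmem).1, hR⟩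

lemma ringInverse_le_smul_ringInverse {r t : A} (hr : IsStrictlyPositive r) {θ : ℝ} (hθ : 0 < θ)
    (hrt : r ≤ θ • t) : t⁻¹ʳ ≤ θ • r⁻¹ʳ := by
  have h : θ⁻¹ • r ≤ t := by
    simpa [smul_smul, inv_mul_cancel₀ hθ.ne'] using
      smul_le_smul_of_nonneg_left hrt (inv_nonneg.mpr hθ.le)
  simpa [ringInverse_smul hr.isUnit (inv_ne_zero hθ.ne')] using
    CStarAlgebra.ringInverse_le_ringInverse h (hr.smul (inv_pos.mpr hθ))

lemma ringInverse_mem_Icc_of_smul_one_le {δ : ℝ} (hδ : 0 < δ) {r : A} (hr : δ • 1 ≤ r) :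
    r⁻¹ʳ ∈ Set.Icc 0 (δ⁻¹ • 1) := by
  have hδ1 : IsStrictlyPositive (δ • (1 : A)) := isStrictlyPositive_one.smul hδ
  refine ⟨(hδ1.of_le hr).ringInverse.nonneg, ?_⟩
  simpa [ringInverse_smul isUnit_one hδ.ne'] using
    CStarAlgebra.ringInverse_le_ringInverse hr hδ1

theorem isOrderContraction_add_comp_ringInverse {C : A} {δ κ : ℝ} {Φ : A → A} (hδ : 0 < δ)
    (hC : δ • 1 ≤ C) (hκ : 0 ≤ κ) (hΦ : Monotone Φ)
    (hΦsmul : ∀ t : ℝ, 0 ≤ t → ∀ X, Φ (t • X) = t • Φ X) (hΦ1 : Φ 1 ≤ κ • 1) :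
    IsOrderContraction C (κ / δ ^ 2) (fun r => C + Φ r⁻¹ʳ) := by
  set μ := κ / δ ^ 2
  have hΦ0 : Φ 0 = 0 := by simpa using hΦsmul 0 le_rfl 0
  have hbound : ∀ r, C ≤ r → 0 ≤ Φ r⁻¹ʳ ∧ Φ r⁻¹ʳ ≤ μ • C := fun r hr => by
    obtain ⟨h0, h1⟩ := ringInverse_mem_Icc_of_smul_one_le hδ (hC.trans hr)
    refine ⟨hΦ0 ▸ hΦ h0, ?_⟩
    have h1C : (1 : A) ≤ δ⁻¹ • C := by
      simpa [smul_smul, inv_mul_cancel₀ hδ.ne'] using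
        smul_le_smul_of_nonneg_left hC (inv_nonneg.mpr hδ.le)
    calc Φ r⁻¹ʳ ≤ δ⁻¹ • Φ 1 := (hΦ h1).trans_eq (hΦsmul _ (by positivity) 1)
      _ ≤ δ⁻¹ • κ • (1 : A) := smul_le_smul_of_nonneg_left hΦ1 (by positivity)
      _ ≤ δ⁻¹ • κ • δ⁻¹ • C := by gcongr
      _ = μ • C := by rw [smul_smul, smul_smul]; congr 1; ring
  refine ⟨by positivity, fun r hr => le_add_of_nonneg_right (hbound r hr).1,
    fun r hr => ?_, fun r t θ hr ht hθ hrt => ?_⟩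
  · simpa [add_smul, add_comm] using add_le_add_left (hbound r hr).2 C
  · have hrpos : IsStrictlyPositive r := (isStrictlyPositive_one.smul hδ).of_le (hC.trans hr)
    have hθ0 : 0 < θ := by linarith
    calc C + Φ t⁻¹ʳ ≤ C + θ • Φ r⁻¹ʳ := by
          grw [hΦ (ringInverse_le_smul_ringInverse hrpos hθ0 hrt), hΦsmul θ hθ0.le]
      _ ≤ (1 + μ / (1 + μ) * (θ - 1)) • (C + Φ r⁻¹ʳ) :=
          add_smul_le_smul_add (by positivity) hθ (hbound r hr).2

end CStarAlgebra

section Diag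

variable {H : Type*} [NormedAddCommGroup H] [InnerProductSpace ℂ H]

lemma diagOp_smul (c : ℝ) (q : H →L[ℂ] H) : diagOp (c • q) = c • diagOp q := by
  ext; rfl

lemma norm_diagOp_le (q : H →L[ℂ] H) : ‖diagOp q‖ ≤ ‖q‖ :=
  LinearMap.mkContinuous_norm_le _ (norm_nonneg q) _

variable [CompleteSpace H]

lemma diagOp_adjoint (q : H →L[ℂ] H) : adjoint (diagOp q) = diagOp (adjoint q) := by
  refine ((eq_adjoint_iff _ _).mpr fun ξ η => ?_).symm
  simp only [lp.inner_eq_tsum, diagOp_apply, adjoint_inner_left]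

def diagStarAlgHom : (H →L[ℂ] H) →⋆ₐ[ℂ] (l2 H →L[ℂ] l2 H) where
  toFun := diagOp
  map_one' := by ext; rfl
  map_mul' _ _ := by ext; rfl
  map_zero' := by ext; rfl
  map_add' _ _ := by ext; rfl
  commutes' _ := by ext; rfl
  map_star' q := by simp only [star_eq_adjoint, diagOp_adjoint]

lemma diagOp_zero : diagOp (0 : H →L[ℂ] H) = 0 := map_zero (diagStarAlgHom (H := H))

lemma diagOp_one : diagOp (1 : H →L[ℂ] H) = 1 := map_one (diagStarAlgHom (H := H))

lemma diagOp_add (a b : H →L[ℂ] H) : diagOp (a + b) = diagOp a + diagOp b :=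
  map_add (diagStarAlgHom (H := H)) a b

lemma monotone_diagOp : Monotone (diagOp : (H →L[ℂ] H) → l2 H →L[ℂ] l2 H) :=
  OrderHomClass.mono (diagStarAlgHom (H := H))

lemma continuous_diagOp : Continuous (diagOp : (H →L[ℂ] H) → l2 H →L[ℂ] l2 H) :=
  AddMonoidHomClass.continuous_of_bound (diagStarAlgHom (H := H)) 1 fun q => by
    rw [one_mul]; exact norm_diagOp_le q

lemma diagOp_sub (a b : H →L[ℂ] H) : diagOp (a - b) = diagOp a - diagOp b :=
  map_sub (diagStarAlgHom (H := H)) a b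

lemma adjoint_evalCLM_zero :
    adjoint (lp.evalCLM ℂ (fun _ : ℕ => H) 2 0) =
      lp.singleContinuousLinearMap ℂ (fun _ : ℕ => H) 2 0 :=
  ((eq_adjoint_iff _ _).mpr fun x ξ => lp.inner_single_left 0 x ξ).symm

lemma evalCLM_zero_conj_diagOp (q : H →L[ℂ] H) :
    lp.evalCLM ℂ (fun _ : ℕ => H) 2 0 ∘L diagOp q ∘L adjoint (lp.evalCLM ℂ _ 2 0) = q := by
  ext x
  rw [comp_apply, comp_apply, adjoint_evalCLM_zero, lp.singleContinuousLinearMap_apply]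
  change q ((lp.single 2 0 x : l2 H) 0) = q x
  rw [lp.single_apply_self]

lemma diagOp_le_diagOp_iff {a b : H →L[ℂ] H} : diagOp a ≤ diagOp b ↔ a ≤ b := by
  refine ⟨fun h => ?_, fun h => monotone_diagOp h⟩
  rw [← sub_nonneg, nonneg_iff_isPositive] at h ⊢
  simpa [← diagOp_sub, evalCLM_zero_conj_diagOp] using
    h.conj_adjoint (lp.evalCLM ℂ (fun _ : ℕ => H) 2 0)

end Diag

lemma StronglyPositive.isStrictlyPositive {E : Type*} [NormedAddCommGroup E]
    [InnerProductSpace ℂ E] [CompleteSpace E] {ρ : E →L[ℂ] E} (h : StronglyPositive ρ) :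
    IsStrictlyPositive ρ :=
  let ⟨_, hδ, hρ⟩ := h
  (isStrictlyPositive_one.smul hδ).of_le hρ

section ConjAdjoint

variable {𝕜 E F : Type*} [RCLike 𝕜] [NormedAddCommGroup E] [InnerProductSpace 𝕜 E]
  [CompleteSpace E] [NormedAddCommGroup F] [InnerProductSpace 𝕜 F] [CompleteSpace F]

lemma conj_adjoint_nonneg {T : E →L[𝕜] E} (hT : 0 ≤ T) (S : E →L[𝕜] F) :
    0 ≤ S ∘L T ∘L adjoint S := by
  rw [nonneg_iff_isPositive] at hT ⊢
  exact hT.conj_adjoint S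

lemma monotone_conj_adjoint (S : E →L[𝕜] F) :
    Monotone fun T : E →L[𝕜] E => S ∘L T ∘L adjoint S :=
  fun T T' h => by
    change S ∘L T ∘L adjoint S ≤ S ∘L T' ∘L adjoint S
    rw [ContinuousLinearMap.le_def] at h ⊢
    simpa only [sub_comp, comp_sub] using h.conj_adjoint S

end ConjAdjoint

section Riccati

variable {H : Type*} [NormedAddCommGroup H] [InnerProductSpace ℂ H] [CompleteSpace H]
  (A11 : H →L[ℂ] H) (A12 : l2 H →L[ℂ] H) (A22 : l2 H →L[ℂ] l2 H)

-- `r` stands for the gap `diag{s} − A₂₂`.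
def riccatiOfGap (r : l2 H →L[ℂ] l2 H) : H →L[ℂ] H :=
  A11 + A12 ∘L r⁻¹ʳ ∘L adjoint A12

def riccatiGapMap (r : l2 H →L[ℂ] l2 H) : l2 H →L[ℂ] l2 H :=
  (diagOp A11 - A22) + diagOp (A12 ∘L r⁻¹ʳ ∘L adjoint A12)

def IsRiccatiSolution (s : H →L[ℂ] H) : Prop :=
  IsSelfAdjoint s ∧ StronglyPositive s ∧ StronglyPositive (diagOp s - A22) ∧
    riccatiMap A11 A12 A22 s = s

lemma riccatiMap_eq_riccatiOfGap (s : H →L[ℂ] H) :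
    riccatiMap A11 A12 A22 s = riccatiOfGap A11 A12 (diagOp s - A22) := rfl

lemma diagOp_riccatiOfGap_sub (r : l2 H →L[ℂ] l2 H) :
    diagOp (riccatiOfGap A11 A12 r) - A22 = riccatiGapMap A11 A12 A22 r := by
  rw [riccatiOfGap, riccatiGapMap, diagOp_add]
  abel

lemma diagOp_riccatiSeq_sub (n : ℕ) :
    diagOp (riccatiSeq A11 A12 A22 n) - A22 =
      (riccatiGapMap A11 A12 A22)^[n] (diagOp A11 - A22) := by
  induction n with
  | zero => rfl
  | succ n ih =>
    rw [Function.iterate_succ_apply', ← ih, ← diagOp_riccatiOfGap_sub]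
    rfl

lemma continuousAt_riccatiOfGap {r : l2 H →L[ℂ] l2 H} (hr : IsUnit r) :
    ContinuousAt (riccatiOfGap A11 A12) r := by
  have hconj : Continuous fun X : l2 H →L[ℂ] l2 H => A12 ∘L X ∘L adjoint A12 := by
    fun_prop
  obtain ⟨u, rfl⟩ := hr
  exact continuousAt_const.add (hconj.continuousAt.comp (NormedRing.inverse_continuousAt u))

lemma continuousAt_riccatiGapMap {r : l2 H →L[ℂ] l2 H} (hr : IsUnit r) :
    ContinuousAt (riccatiGapMap A11 A12 A22) r :=
  ((continuous_diagOp.continuousAt.comp (continuousAt_riccatiOfGap A11 A12 hr)).sub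
    continuousAt_const).congr (Eventually.of_forall (diagOp_riccatiOfGap_sub A11 A12 A22))

variable {A11 A12 A22}

theorem isOrderContraction_riccatiGapMap {δ : ℝ} (hδ : 0 < δ)
    (hgap : δ • 1 ≤ diagOp A11 - A22) :
    IsOrderContraction (diagOp A11 - A22) (‖A12 ∘L adjoint A12‖ / δ ^ 2)
      (riccatiGapMap A11 A12 A22) := by
  refine isOrderContraction_add_comp_ringInverse hδ hgap (norm_nonneg _)
    (monotone_diagOp.comp (monotone_conj_adjoint A12)) (fun t _ X => ?_) ?_
  · change diagOp (A12 ∘L (t • X) ∘L adjoint A12) = t • diagOp (A12 ∘L X ∘L adjoint A12)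
    rw [smul_comp, comp_smul, diagOp_smul]
  · have hA12 : A12 ∘L adjoint A12 ≤ ‖A12 ∘L adjoint A12‖ • 1 := by
      rw [← Algebra.algebraMap_eq_smul_one]
      have h0 : 0 ≤ A12 ∘L adjoint A12 := by
        simpa [one_def] using conj_adjoint_nonneg zero_le_one A12
      exact h0.isSelfAdjoint.le_algebraMap_norm_self
    change diagOp (A12 ∘L adjoint A12) ≤ ‖A12 ∘L adjoint A12‖ • (1 : l2 H →L[ℂ] l2 H)
    simpa only [diagOp_smul, diagOp_one] using monotone_diagOp hA12

lemma le_riccatiGapMap {r : l2 H →L[ℂ] l2 H} (hr : StronglyPositive r) :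
    diagOp A11 - A22 ≤ riccatiGapMap A11 A12 A22 r :=
  let ⟨_, hδ, hr⟩ := hr
  le_add_of_nonneg_right <| by
    simpa [diagOp_zero] using monotone_diagOp
      (conj_adjoint_nonneg (ringInverse_mem_Icc_of_smul_one_le hδ hr).1 A12)

lemma IsRiccatiSolution.isFixedPt {s : H →L[ℂ] H} (hs : IsRiccatiSolution A11 A12 A22 s) :
    Function.IsFixedPt (riccatiGapMap A11 A12 A22) (diagOp s - A22) := by
  rw [Function.IsFixedPt, ← diagOp_riccatiOfGap_sub, ← riccatiMap_eq_riccatiOfGap, hs.2.2.2]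

theorem IsRiccatiSolution.unique (hgap : StronglyPositive (diagOp A11 - A22))
    {s t : H →L[ℂ] H} (hs : IsRiccatiSolution A11 A12 A22 s)
    (ht : IsRiccatiSolution A11 A12 A22 t) : s = t := by
  obtain ⟨δ, hδ, hC⟩ := hgap
  have hgap_le : ∀ {u}, IsRiccatiSolution A11 A12 A22 u → diagOp A11 - A22 ≤ diagOp u - A22 :=
    fun hu => hu.isFixedPt.eq ▸ le_riccatiGapMap hu.2.2.1
  have hr := (isOrderContraction_riccatiGapMap hδ hC).eq_of_isFixedPt (hgap_le hs) (hgap_le ht)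
    hs.isFixedPt ht.isFixedPt
  rw [← hs.2.2.2, ← ht.2.2.2, riccatiMap_eq_riccatiOfGap, riccatiMap_eq_riccatiOfGap, hr]

lemma isRiccatiSolution_riccatiOfGap {δ : ℝ} (hδ : 0 < δ) (hC : δ • 1 ≤ diagOp A11 - A22)
    (hA22 : 0 ≤ A22) {R : l2 H →L[ℂ] l2 H} (hCR : diagOp A11 - A22 ≤ R)
    (hR : Function.IsFixedPt (riccatiGapMap A11 A12 A22) R) :
    IsRiccatiSolution A11 A12 A22 (riccatiOfGap A11 A12 R) := by
  have hgap : diagOp (riccatiOfGap A11 A12 R) - A22 = R :=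
    (diagOp_riccatiOfGap_sub A11 A12 A22 R).trans hR
  have hA11 : δ • 1 ≤ A11 := by
    rw [← diagOp_le_diagOp_iff, diagOp_smul, diagOp_one]
    exact hC.trans (sub_le_self _ hA22)
  have hR0 : 0 ≤ R⁻¹ʳ := (ringInverse_mem_Icc_of_smul_one_le hδ (hC.trans hCR)).1
  have hs : StronglyPositive (riccatiOfGap A11 A12 R) :=
    ⟨δ, hδ, hA11.trans (le_add_of_nonneg_right (conj_adjoint_nonneg hR0 A12))⟩
  exact ⟨hs.isStrictlyPositive.isSelfAdjoint, hs, ⟨δ, hδ, hgap.symm ▸ hC.trans hCR⟩,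
    by rw [riccatiMap_eq_riccatiOfGap, hgap]⟩

theorem exists_isRiccatiSolution_tendsto_riccatiSeq (hgap : StronglyPositive (diagOp A11 - A22))
    (hA22 : 0 ≤ A22) :
    ∃ s, IsRiccatiSolution A11 A12 A22 s ∧ Tendsto (riccatiSeq A11 A12 A22) atTop (𝓝 s) := by
  obtain ⟨δ, hδ, hC⟩ := hgap
  have hCpos : IsStrictlyPositive (diagOp A11 - A22) :=
    StronglyPositive.isStrictlyPositive ⟨δ, hδ, hC⟩
  obtain ⟨R, hCR, hR⟩ :=
    (isOrderContraction_riccatiGapMap hδ hC).exists_tendsto_iterate hCpos.nonneg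
  have hRunit : IsUnit R := (hCpos.of_le hCR).isUnit
  have hfix : Function.IsFixedPt (riccatiGapMap A11 A12 A22) R :=
    isFixedPt_of_tendsto_iterate hR (continuousAt_riccatiGapMap A11 A12 A22 hRunit)
  have hseq : (fun n => riccatiSeq A11 A12 A22 (n + 1)) =
      riccatiOfGap A11 A12 ∘ fun n => (riccatiGapMap A11 A12 A22)^[n] (diagOp A11 - A22) :=
    funext fun n => congrArg (riccatiOfGap A11 A12) (diagOp_riccatiSeq_sub A11 A12 A22 n)
  refine ⟨riccatiOfGap A11 A12 R, isRiccatiSolution_riccatiOfGap hδ hC hA22 hCR hfix,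
    (tendsto_add_atTop_iff_nat 1).mp ?_⟩
  rw [hseq]
  exact (continuousAt_riccatiOfGap A11 A12 hRunit).tendsto.comp hR

end Riccati

theorem riccati_exists_unique_positive_definite_solution_finiteDim_general
    (m : ℕ)
    (A11 : EuclideanSpace ℂ (Fin m) →L[ℂ] EuclideanSpace ℂ (Fin m))
    (A12 : l2 (EuclideanSpace ℂ (Fin m)) →L[ℂ] EuclideanSpace ℂ (Fin m))
    (A22 : l2 (EuclideanSpace ℂ (Fin m)) →L[ℂ] l2 (EuclideanSpace ℂ (Fin m)))
    (hgap : StronglyPositive (diagOp A11 - A22))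
    (hA22 : 0 ≤ A22) :
    (∃! s : EuclideanSpace ℂ (Fin m) →L[ℂ] EuclideanSpace ℂ (Fin m),
        IsSelfAdjoint s ∧ StronglyPositive s ∧
          StronglyPositive (diagOp s - A22) ∧ riccatiMap A11 A12 A22 s = s) ∧
      ∀ s : EuclideanSpace ℂ (Fin m) →L[ℂ] EuclideanSpace ℂ (Fin m),
        (IsSelfAdjoint s ∧ StronglyPositive s ∧
          StronglyPositive (diagOp s - A22) ∧ riccatiMap A11 A12 A22 s = s) →
        (∀ x, Filter.Tendsto (fun n => riccatiSeq A11 A12 A22 (2 * n) x)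
            Filter.atTop (𝓝 (s x))) ∧
        (∀ x, Filter.Tendsto (fun n => riccatiSeq A11 A12 A22 (2 * n + 1) x)
            Filter.atTop (𝓝 (s x))) := by
  obtain ⟨s, hs, hlim⟩ := exists_isRiccatiSolution_tendsto_riccatiSeq (A12 := A12) hgap hA22
  have huniq : ∀ t, IsRiccatiSolution A11 A12 A22 t → t = s := fun t ht => ht.unique hgap hs
  refine ⟨⟨s, hs, huniq⟩, fun t ht => ?_⟩
  obtain rfl := huniq t ht
  have happly : ∀ x, Tendsto (fun n => riccatiSeq A11 A12 A22 n x) atTop (𝓝 (t x)) :=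
    fun x => ((apply ℂ _ x).continuous.tendsto t).comp hlim
  exact ⟨fun x => (happly x).comp (StrictMono.tendsto_atTop fun a b h => by omega),
    fun x => (happly x).comp (StrictMono.tendsto_atTop fun a b h => by omega)⟩

/-- **Theorem 2.5.**  For `H = ℂᵐ` (finite dimension), the existence and uniqueness of the
strongly positive (i.e. positive-definite) solution of the Riccati equation holds without any
invertibility assumption on `A₁₂A₁₂*`. -/
theorem riccati_exists_unique_positive_definite_solution_finiteDim
    (m : ℕ)
    (A11 : EuclideanSpace ℂ (Fin m) →L[ℂ] EuclideanSpace ℂ (Fin m))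
    (A12 : l2 (EuclideanSpace ℂ (Fin m)) →L[ℂ] EuclideanSpace ℂ (Fin m))
    (A22 : l2 (EuclideanSpace ℂ (Fin m)) →L[ℂ] l2 (EuclideanSpace ℂ (Fin m)))
    (hA11sa : IsSelfAdjoint A11) (hA22sa : IsSelfAdjoint A22)
    (hgap : StronglyPositive (diagOp A11 - A22))
    (hA11 : 0 ≤ A11) (hA22 : 0 ≤ A22) :
    (∃! s : EuclideanSpace ℂ (Fin m) →L[ℂ] EuclideanSpace ℂ (Fin m),
        IsSelfAdjoint s ∧ StronglyPositive s ∧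
          StronglyPositive (diagOp s - A22) ∧ riccatiMap A11 A12 A22 s = s) ∧
      ∀ s : EuclideanSpace ℂ (Fin m) →L[ℂ] EuclideanSpace ℂ (Fin m),
        (IsSelfAdjoint s ∧ StronglyPositive s ∧
          StronglyPositive (diagOp s - A22) ∧ riccatiMap A11 A12 A22 s = s) →
        (∀ x, Filter.Tendsto (fun n => riccatiSeq A11 A12 A22 (2 * n) x)
            Filter.atTop (𝓝 (s x))) ∧
        (∀ x, Filter.Tendsto (fun n => riccatiSeq A11 A12 A22 (2 * n + 1) x)
            Filter.atTop (𝓝 (s x))) :=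
  riccati_exists_unique_positive_definite_solution_finiteDim_general m A11 A12 A22 hgap hA22
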